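/- Let (A,≤) be a finite linear order, E a symmetric irreflexive graph relation on A, and define a ternary relation R by: for a < b < c, put (a,b,c) and its cyclic rotations into R if the number of edges of E among {a,b,c} is even, and otherwise put (a,c,b) and its cyclic rotations into R. Then (A,R) is a 3-hypertournament in which every 4-element substructure is isomorphic to C₄ or H₄ (equivalently, the hypergraph associated to (A,R) via ≤ has an even number of hyperedges on every 4-element subset). -/

import Mathlib

def IsHyper3 {T : Type*} (R : T → T → T → Prop) : Prop :=
  (∀ a b c, R a b c → a ≠ b ∧ b ≠ c ∧ a ≠ c) ∧
  (∀ a b c, R a b c → R b c a) ∧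
  (∀ a b c, a ≠ b → b ≠ c → a ≠ c → (R a b c ↔ ¬ R a c b))

/-- The number of E-edges among {a,b,c} is even. -/
def EvenTriple {A : Type*} (E : A → A → Prop) (a b c : A) : Prop :=
  E a b ↔ Xor' (E b c) (E a c)

/-- (a,b,c) is a cyclic rotation of an <-increasing triple. -/
def Cyc3 {A : Type*} [LinearOrder A] (a b c : A) : Prop :=
  (a < b ∧ b < c) ∨ (b < c ∧ c < a) ∨ (c < a ∧ a < b)

/-- The 3-hypertournament obtained from the graph E and the order: for a < b < c, orient
(a,b,c) (and rotations) if the number of edges on {a,b,c} is even, else (a,c,b). -/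
def RofE {A : Type*} [LinearOrder A] (E : A → A → Prop) (a b c : A) : Prop :=
  (Cyc3 a b c ∧ EvenTriple E a b c) ∨ (Cyc3 c b a ∧ ¬ EvenTriple E a b c)

section Aux

variable {A : Type*} [LinearOrder A] (E : A → A → Prop)

lemma cyc3_rot {a b c : A} (h : Cyc3 a b c) : Cyc3 b c a := by
  unfold Cyc3 at *; tauto

lemma cyc3_ne {a b c : A} (h : Cyc3 a b c) : a ≠ b ∧ b ≠ c ∧ a ≠ c := by
  rcases h with ⟨h1, h2⟩ | ⟨h1, h2⟩ | ⟨h1, h2⟩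
  · exact ⟨h1.ne, h2.ne, (h1.trans h2).ne⟩
  · exact ⟨(h1.trans h2).ne', h1.ne, h2.ne'⟩
  · exact ⟨h2.ne, (h1.trans h2).ne', h1.ne'⟩

lemma cyc3_total {a b c : A} (hab : a ≠ b) (hbc : b ≠ c) (hac : a ≠ c) :
    Cyc3 a b c ↔ ¬ Cyc3 a c b := by
  rcases hab.lt_or_gt with h1 | h1 <;> rcases hbc.lt_or_gt with h2 | h2 <;>
    rcases hac.lt_or_gt with h3 | h3 <;>
    first
      | exact absurd (h1.trans h2) (lt_asymm h3)
      | exact absurd (h2.trans h1) (lt_asymm h3)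
      | simp [Cyc3, h1, h2, h3, lt_asymm h1, lt_asymm h2, lt_asymm h3]

lemma et_rot (hsymm : ∀ a b, E a b → E b a) (a b c : A) :
    EvenTriple E a b c ↔ EvenTriple E b c a := by
  have h1 : E c a ↔ E a c := ⟨hsymm _ _, hsymm _ _⟩
  have h2 : E b a ↔ E a b := ⟨hsymm _ _, hsymm _ _⟩
  unfold EvenTriple Xor' Xor; tauto

lemma et_swap (hsymm : ∀ a b, E a b → E b a) (a b c : A) :
    EvenTriple E a b c ↔ EvenTriple E a c b := by
  have h1 : E c b ↔ E b c := ⟨hsymm _ _, hsymm _ _⟩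
  unfold EvenTriple Xor' Xor; tauto

lemma rofE_of_lt {a b c : A} (hab : a < b) (hbc : b < c) :
    RofE E a b c ↔ EvenTriple E a b c := by
  have hac := hab.trans hbc
  simp [RofE, Cyc3, hab, hbc, hac, lt_asymm hab, lt_asymm hbc, lt_asymm hac]

end Aux

/-- RofE is a 3-hypertournament whose associated hypergraph has an even
number of hyperedges on every 4-element subset (equivalently, every 4-element
substructure is isomorphic to C₄ or H₄). -/
theorem stmt7 {A : Type*} [LinearOrder A] [Fintype A] (E : A → A → Prop)
    (hsymm : ∀ a b, E a b → E b a) (hirr : ∀ a, ¬ E a a) :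
    IsHyper3 (RofE E) ∧
    ∀ a b c d : A, a < b → b < c → c < d →
      Even ({t : A × A × A |
        (t = (a,b,c) ∨ t = (a,b,d) ∨ t = (a,c,d) ∨ t = (b,c,d)) ∧
        RofE E t.1 t.2.1 t.2.2}.ncard) := by
  classical
  constructor
  · refine ⟨?_, ?_, ?_⟩
    · rintro a b c (⟨h, _⟩ | ⟨h, _⟩)
      · exact cyc3_ne h
      · obtain ⟨h1, h2, h3⟩ := cyc3_ne h
        exact ⟨h2.symm, h1.symm, h3.symm⟩
    · rintro a b c (⟨h, he⟩ | ⟨h, he⟩)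
      · exact Or.inl ⟨cyc3_rot h, (et_rot E hsymm a b c).1 he⟩
      · exact Or.inr ⟨cyc3_rot (cyc3_rot h),
          fun he' => he ((et_rot E hsymm a b c).2 he')⟩
    · intro a b c hab hbc hac
      have hC := cyc3_total hab hbc hac
      have hCr : Cyc3 c b a ↔ Cyc3 a c b :=
        ⟨fun h => cyc3_rot (cyc3_rot h), fun h => cyc3_rot h⟩
      have hCr2 : Cyc3 b c a ↔ Cyc3 a b c :=
        ⟨fun h => cyc3_rot (cyc3_rot h), fun h => cyc3_rot h⟩
      have hE := et_swap E hsymm a b c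
      unfold RofE
      tauto
  · intro a b c d hab hbc hcd
    have hac := hab.trans hbc
    have hbd := hbc.trans hcd
    have had := hac.trans hcd
    have h1 := rofE_of_lt E hab hbc
    have h2 := rofE_of_lt E hab hbd
    have h3 := rofE_of_lt E hac hcd
    have h4 := rofE_of_lt E hbc hcd
    have hset : {t : A × A × A |
        (t = (a,b,c) ∨ t = (a,b,d) ∨ t = (a,c,d) ∨ t = (b,c,d)) ∧
        RofE E t.1 t.2.1 t.2.2}
        = ↑(({(a,b,c),(a,b,d),(a,c,d),(b,c,d)} : Finset (A × A × A)).filter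
            (fun t => RofE E t.1 t.2.1 t.2.2)) := by
      ext t
      simp [Finset.mem_filter]
    rw [hset, Set.ncard_coe_finset, Finset.card_filter]
    rw [Finset.sum_insert (by
          simp [Prod.ext_iff, hab.ne, hbc.ne, hcd.ne, hac.ne, hbd.ne, had.ne]),
        Finset.sum_insert (by
          simp [Prod.ext_iff, hab.ne, hbc.ne, hcd.ne, hac.ne, hbd.ne, had.ne]),
        Finset.sum_insert (by
          simp [Prod.ext_iff, hab.ne, hbc.ne, hcd.ne, hac.ne, hbd.ne, had.ne]),
        Finset.sum_singleton]
    simp only [h1, h2, h3, h4]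
    by_cases e1 : E a b <;> by_cases e2 : E a c <;> by_cases e3 : E a d <;>
      by_cases e4 : E b c <;> by_cases e5 : E b d <;> by_cases e6 : E c d <;>
      simp [EvenTriple, Xor', e1, e2, e3, e4, e5, e6] <;> decide
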